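/- arXiv:1410.6108 — 3 statements merged into one kernel-verified Lean document; each statement's English description precedes it below -/
import Mathlib

section
/- For a finite simple graph G with n vertices and m edges, the sum over all vertices of the square of the degree satisfies Σ_{u ∈ V} deg(u)² ≤ m·(2m/(n−1) + n − 2). -/
/-!
Regard the adjacency indicator `x` as a vector indexed by ordered pairs of distinct vertices, and
project it onto the subspace of functions `(u, v) ↦ a u + a v + c`. The projection is
`p u v = (d u + d v) / (n - 2) - 2m / ((n - 1) (n - 2))`, and Bessel's inequality
`‖p‖² ≤ ‖x‖² = 2m` is exactly Das's bound.
-/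

open Finset

theorem Matrix.IsSymm.two_mul_sum_sq_rowSum_le {R : Type*} [CommRing R] [LinearOrder R]
    [IsStrictOrderedRing R] {V : Type*} [Fintype V] {A : Matrix V V R} (hA : A.IsSymm)
    (hdiag : A.diag = 0) (hV : 3 ≤ Fintype.card V) :
    2 * (Fintype.card V - 1) * ∑ i, (∑ j, A i j) ^ 2 ≤
      (∑ i, ∑ j, A i j) ^ 2 +
        (Fintype.card V - 1) * (Fintype.card V - 2) * ∑ i, ∑ j, A i j ^ 2 := by
  have hAii : ∀ i, A i i = 0 := congrFun hdiag
  set n : R := (Fintype.card V : R) with hn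
  set d : V → R := fun i => ∑ j, A i j with hd
  have hrow : ∀ i, ∑ j, A i j = d i := fun _ => rfl
  have hAd : ∑ i, ∑ j, A i j * d j = ∑ i, d i ^ 2 := by
    rw [sum_comm]
    simp_rw [← sum_mul, ← hA.apply, hd, sq]
  set s := ∑ i, d i with hs
  set a := (n - 1) * (n - 2)
  set b := n - 1
  -- off the diagonal, `t / a` is the component of `A` orthogonal to all `(i, j) ↦ u i + u j + c`
  set t : V → V → R := fun i j => a * A i j - b * (d i + d j) + s
  have hexp : ∀ i j, t i j ^ 2 = a ^ 2 * A i j ^ 2 - 2 * a * b * (A i j * d i)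
      - 2 * a * b * (A i j * d j) + 2 * a * s * A i j + b ^ 2 * d i ^ 2 + b ^ 2 * d j ^ 2
      + 2 * b ^ 2 * (d i * d j) - 2 * b * s * d i - 2 * b * s * d j + s ^ 2 := fun i j => by
    ring
  have hsum : ∑ i, ∑ j, t i j ^ 2 = ∑ i, t i i ^ 2 + a *
      (s ^ 2 + a * ∑ i, ∑ j, A i j ^ 2 - 2 * b * ∑ i, d i ^ 2) := by
    simp only [hexp, hAii, sum_add_distrib, sum_sub_distrib, ← mul_sum, ← sum_mul, sum_const,
      card_univ, nsmul_eq_mul, hrow, hAd, ← hs, ← hn, ← sq]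
    ring
  have hdiag_le : ∑ i, t i i ^ 2 ≤ ∑ i, ∑ j, t i j ^ 2 :=
    sum_le_sum fun i _ => single_le_sum (fun j _ => sq_nonneg (t i j)) (mem_univ i)
  have ha : 0 < a := by
    have : (3 : R) ≤ n := by rw [hn]; exact_mod_cast hV
    nlinarith
  have key : 0 ≤ s ^ 2 + a * ∑ i, ∑ j, A i j ^ 2 - 2 * b * ∑ i, d i ^ 2 :=
    nonneg_of_mul_nonneg_right (by linarith) ha
  simp only [hrow]
  linarith

namespace SimpleGraph

theorem sum_adjMatrix_apply {R : Type*} [NonAssocSemiring R] {V : Type*} [Fintype V]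
    (G : SimpleGraph V) [DecidableRel G.Adj] (i : V) :
    ∑ j, G.adjMatrix R i j = G.degree i := by
  simp [← card_neighborFinset_eq_degree, neighborFinset_eq_filter]

theorem two_mul_card_sub_one_mul_sum_degree_sq_le {R : Type*} [CommRing R] [LinearOrder R]
    [IsStrictOrderedRing R] {V : Type*} [Fintype V] (G : SimpleGraph V) [DecidableRel G.Adj]
    (hV : 2 ≤ Fintype.card V) :
    2 * (Fintype.card V - 1) * ∑ v, (G.degree v : R) ^ 2 ≤
      (2 * #G.edgeFinset) ^ 2 +
        (Fintype.card V - 1) * (Fintype.card V - 2) * (2 * #G.edgeFinset) := by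
  have hsum : ∑ v, (G.degree v : R) = 2 * #G.edgeFinset :=
    mod_cast G.sum_degrees_eq_twice_card_edges
  rcases hV.eq_or_lt with hV2 | hV3
  · have hdeg_sq_le : ∀ v, (G.degree v : R) ^ 2 ≤ G.degree v := fun v => by
      have : G.degree v ≤ 1 := by have := G.degree_lt_card_verts v; omega
      have : G.degree v ^ 2 ≤ G.degree v := by nlinarith
      exact_mod_cast this
    have hm : (#G.edgeFinset : R) ≤ (#G.edgeFinset : R) ^ 2 :=
      mod_cast Nat.le_self_pow two_ne_zero _
    have hsum_sq_le := sum_le_sum fun v (_ : v ∈ univ) => hdeg_sq_le v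
    rw [← hV2]
    push_cast
    nlinarith
  · have hsq : ∀ i j, G.adjMatrix R i j ^ 2 = G.adjMatrix R i j := fun i j => by
      simp [adjMatrix_apply]
    simpa only [hsq, sum_adjMatrix_apply, hsum] using
      G.isSymm_adjMatrix.two_mul_sum_sq_rowSum_le (G.diag_adjMatrix R) hV3

end SimpleGraph

theorem sum_degree_sq_le_das_general {V : Type*} [Fintype V]
    (G : SimpleGraph V) [DecidableRel G.Adj] (n m : ℕ)
    (hn : Fintype.card V = n) (hm : G.edgeFinset.card = m) (hn2 : 2 ≤ n) :
    (∑ u : V, (G.degree u : ℚ) ^ 2) ≤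
      (m : ℚ) * (2 * m / (n - 1) + n - 2) := by
  subst hn hm
  have hn1 : (0 : ℚ) < Fintype.card V - 1 := by
    have : (2 : ℚ) ≤ Fintype.card V := mod_cast hn2
    linarith
  calc ∑ u, (G.degree u : ℚ) ^ 2
      ≤ ((2 * #G.edgeFinset) ^ 2 + (Fintype.card V - 1) * (Fintype.card V - 2) *
          (2 * #G.edgeFinset)) / (2 * (Fintype.card V - 1)) := by
        rw [le_div_iff₀ (by positivity), mul_comm]
        exact G.two_mul_card_sub_one_mul_sum_degree_sq_le hn2
    _ = #G.edgeFinset * (2 * #G.edgeFinset / (Fintype.card V - 1) + Fintype.card V - 2) := by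
        field_simp
        ring

theorem sum_degree_sq_le_das {V : Type*} [Fintype V] [DecidableEq V]
    (G : SimpleGraph V) [DecidableRel G.Adj] (n m : ℕ)
    (hn : Fintype.card V = n) (hm : G.edgeFinset.card = m) (hn2 : 2 ≤ n) :
    (∑ u : V, (G.degree u : ℚ) ^ 2) ≤
      (m : ℚ) * (2 * m / (n - 1) + n - 2) :=
  sum_degree_sq_le_das_general G n m hn hm hn2
end

section
/- For the complete bipartite graph K_{n₁,n₂} with n₁ and n₂ both even, any bijective labeling π with labels {0,...,n₁+n₂−1} has cyclic bandwidth sum at least (n₁n₂² + n₁²n₂)/4. -/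
/-- Cyclic distance on labels in `{0,...,n-1}` (natural-number version). -/
def dCn (n a b : ℕ) : ℕ := min (Nat.dist a b) (n - Nat.dist a b)

/-- Cyclic bandwidth sum of a labeling `π` of the vertices of `G` by `{0,...,n-1}`. -/
noncomputable def CBS {V : Type*} [Fintype V] (n : ℕ) (G : SimpleGraph V)
    (π : V → Fin n) : ℕ :=
  have := Classical.decEq V
  have : DecidableRel G.Adj := Classical.decRel _
  ∑ e ∈ G.edgeFinset,
    Sym2.lift ⟨fun u v => dCn n (π u) (π v),
      fun u v => by simp [dCn, Nat.dist_comm]⟩ e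

/-!
Average over the `n = 2m` rotations of a half-cycle. Two labels `a, b` are separated by exactly
`2 d_C(a, b)` of the half-cycles `{x | (x + k) mod n < m}`, so `2 CBS(π)` counts, over all `k`,
the edges cut by the `k`-th half-cycle. A half-cycle holds `m` vertices, `a₁` on one side and
`a₂` on the other with `2 (a₁ + a₂) = n₁ + n₂`, and cuts `a₁ (n₂ - a₂) + (n₁ - a₁) a₂ ≥ n₁ n₂ / 2`
edges. Summing over the `n` rotations gives `4 CBS(π) ≥ n n₁ n₂`.
-/

open Finset

lemma add_mul_add_le_two_mul_cross {a₁ a₂ b₁ b₂ : ℕ} (h : a₁ + a₂ = b₁ + b₂) :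
    (a₁ + b₁) * (a₂ + b₂) ≤ 2 * (a₁ * b₂ + b₁ * a₂) := by
  zify at h ⊢
  nlinarith [sq_nonneg ((a₁ : ℤ) - b₁)]

lemma sum_sum_boole_not_iff {α β : Type*} [Fintype α] [Fintype β] (P : α → Prop)
    (Q : β → Prop) [DecidablePred P] [DecidablePred Q] :
    ∑ u, ∑ v, (if ¬(P u ↔ Q v) then 1 else 0) =
      #{u | P u} * #{v | ¬Q v} + #{u | ¬P u} * #{v | Q v} := by
  have h (u : α) : ∑ v, (if ¬(P u ↔ Q v) then 1 else 0) =
      if P u then #{v | ¬Q v} else #{v | Q v} := by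
    by_cases hu : P u <;> simp only [hu, if_true, if_false, true_iff, false_iff, not_not] <;>
      exact (card_filter _ _).symm
  simp_rw [h, sum_ite, sum_const, smul_eq_mul]

lemma card_mul_card_le_two_mul_sum_sum_boole_not_iff {α β : Type*} [Fintype α] [Fintype β]
    (P : α → Prop) (Q : β → Prop) [DecidablePred P] [DecidablePred Q]
    (hhalf : 2 * (#{u | P u} + #{v | Q v}) = Fintype.card α + Fintype.card β) :
    Fintype.card α * Fintype.card β ≤ 2 * ∑ u, ∑ v, (if ¬(P u ↔ Q v) then 1 else 0) := by
  have hα : #{u | P u} + #{u | ¬P u} = Fintype.card α := card_filter_add_card_filter_not P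
  have hβ : #{v | Q v} + #{v | ¬Q v} = Fintype.card β := card_filter_add_card_filter_not Q
  rw [sum_sum_boole_not_iff, ← hα, ← hβ]
  exact add_mul_add_le_two_mul_cross (by omega)

def halfCycle (m : ℕ) (k : Fin (2 * m)) : Finset (Fin (2 * m)) := {x | (x + k).val < m}

lemma card_halfCycle {m : ℕ} [NeZero m] (k : Fin (2 * m)) : #(halfCycle m k) = m := by
  rw [halfCycle, card_equiv (Equiv.addRight k) (t := {y | y.val < m}) (by simp),
    Fin.card_filter_val_lt]
  omega

lemma dCn_eq_min_val_sub {n : ℕ} (a b : Fin n) :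
    dCn n a b = min (a - b).val (n - (a - b).val) := by
  rcases le_or_gt b a with h | h
  · rw [Fin.coe_sub_iff_le.mpr h, dCn, Nat.dist_comm, Nat.dist_eq_sub_of_le h]
  · rw [Fin.coe_sub_iff_lt.mpr h, dCn, Nat.dist_eq_sub_of_le h.le]
    omega

lemma card_filter_range_not_mod_lt_iff_lt {m c : ℕ} (hc : c < 2 * m) :
    #{j ∈ range (2 * m) | ¬((c + j) % (2 * m) < m ↔ j < m)} = 2 * min c (2 * m - c) := by
  have hset : {j ∈ range (2 * m) | ¬((c + j) % (2 * m) < m ↔ j < m)} =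
      Ico (m - c) (min m (2 * m - c)) ∪ Ico (max m (2 * m - c)) (min (2 * m) (3 * m - c)) := by
    ext j
    simp only [mem_filter, mem_range, mem_union, mem_Ico]
    -- `j < m` with `c + j` reduced into `[m, 2m)`, or `j ≥ m` with `c + j` wrapping into `[0, m)`
    rcases lt_or_ge j (2 * m) with hj | hj
    · rcases lt_or_ge (c + j) (2 * m) with h | h
      · rw [Nat.mod_eq_of_lt h]; omega
      · rw [Nat.mod_eq_sub_mod h, Nat.mod_eq_of_lt (by omega)]; omega
    · omega
  rw [hset, card_union_of_disjoint, Nat.card_Ico, Nat.card_Ico]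
  · omega
  · rw [disjoint_left]
    intro j hj hj'
    simp only [mem_Ico] at hj hj'
    omega

lemma card_filter_separating_halfCycle {m : ℕ} [NeZero m] (a b : Fin (2 * m)) :
    #{k | ¬(a ∈ halfCycle m k ↔ b ∈ halfCycle m k)} = 2 * dCn (2 * m) a b := by
  -- substituting `j = b + k` turns the pair `(a, b)` into `(a - b, 0)`
  have h := card_equiv (Equiv.addLeft b) (s := {k | ¬(a ∈ halfCycle m k ↔ b ∈ halfCycle m k)})
    (t := {j | ¬((a - b + j).val < m ↔ j.val < m)}) (by simp [halfCycle, add_comm b])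
  rw [h, dCn_eq_min_val_sub, ← card_filter_range_not_mod_lt_iff_lt (a - b).isLt, card_filter,
    card_filter]
  simp only [Fin.val_add]
  exact Fin.sum_univ_eq_sum_range
    (fun j => if ¬((↑(a - b) + j) % (2 * m) < m ↔ j < m) then 1 else 0) _

lemma cbs_completeBipartiteGraph {α β : Type*} [Fintype α] [Fintype β] {n : ℕ}
    (π : α ⊕ β → Fin n) :
    CBS n (completeBipartiteGraph α β) π = ∑ u, ∑ v, dCn n (π (.inl u)) (π (.inr v)) := by
  classical
  rw [CBS, ← sum_product']
  refine (sum_bij (fun p _ => s(.inl p.1, .inr p.2)) (by simp) ?_ ?_ (fun _ _ => rfl)).symm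
  · rintro ⟨u, v⟩ - ⟨u', v'⟩ - h
    simpa using h
  · intro e he
    induction e with
    | _ x y =>
      rcases x with u | u <;> rcases y with v | v
      · simp at he
      · exact ⟨(u, v), mem_univ _, rfl⟩
      · exact ⟨(v, u), mem_univ _, Sym2.eq_swap⟩
      · simp at he

section Labeling

variable {α β : Type*} [Fintype α] [Fintype β] {m : ℕ} [NeZero m] (π : α ⊕ β ≃ Fin (2 * m))

lemma card_mul_card_le_two_mul_sum_sum_separated (k : Fin (2 * m)) :
    Fintype.card α * Fintype.card β ≤ 2 * ∑ u, ∑ v,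
      (if ¬(π (.inl u) ∈ halfCycle m k ↔ π (.inr v) ∈ halfCycle m k) then 1 else 0) := by
  refine card_mul_card_le_two_mul_sum_sum_boole_not_iff _ _ ?_
  have hcard : Fintype.card α + Fintype.card β = 2 * m := by
    simpa using Fintype.card_congr π
  have hhalf : #{u | π (.inl u) ∈ halfCycle m k} + #{v | π (.inr v) ∈ halfCycle m k} = m := by
    simp only [card_filter,
      ← Fintype.sum_sum_type (f := fun w => if π w ∈ halfCycle m k then 1 else 0)]
    rw [Equiv.sum_comp π (fun x => if x ∈ halfCycle m k then 1 else 0), ← card_filter,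
      filter_mem_eq_inter, univ_inter, card_halfCycle]
  omega

lemma two_mul_cbs_completeBipartiteGraph :
    2 * CBS (2 * m) (completeBipartiteGraph α β) π = ∑ k, ∑ u, ∑ v,
      (if ¬(π (.inl u) ∈ halfCycle m k ↔ π (.inr v) ∈ halfCycle m k) then 1 else 0) := by
  simp only [cbs_completeBipartiteGraph, mul_sum, ← card_filter_separating_halfCycle, card_filter]
  exact (sum_congr rfl fun _ _ => sum_comm).trans sum_comm

end Labeling

theorem mul_card_mul_card_le_four_mul_cbs {α β : Type*} [Fintype α] [Fintype β] {n : ℕ}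
    (hn : Even n) (π : α ⊕ β ≃ Fin n) :
    n * (Fintype.card α * Fintype.card β) ≤ 4 * CBS n (completeBipartiteGraph α β) π := by
  obtain ⟨m, rfl⟩ := even_iff_two_dvd.mp hn
  rcases eq_zero_or_neZero m with rfl | _
  · simp
  calc 2 * m * (Fintype.card α * Fintype.card β)
      = ∑ _k : Fin (2 * m), Fintype.card α * Fintype.card β := by simp
    _ ≤ ∑ k, 2 * ∑ u, ∑ v,
          (if ¬(π (.inl u) ∈ halfCycle m k ↔ π (.inr v) ∈ halfCycle m k) then 1 else 0) :=
        sum_le_sum fun k _ => card_mul_card_le_two_mul_sum_sum_separated π k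
    _ = 4 * CBS (2 * m) (completeBipartiteGraph α β) π := by
        rw [← mul_sum, ← two_mul_cbs_completeBipartiteGraph]; ring

theorem cbs_completeBipartite_lb_general (n₁ n₂ : ℕ)
    (he₁ : Even n₁) (he₂ : Even n₂)
    (π : (Fin n₁ ⊕ Fin n₂) ≃ Fin (n₁ + n₂)) :
    (n₁ * n₂ ^ 2 + n₁ ^ 2 * n₂) / 4 ≤
      CBS (n₁ + n₂) (completeBipartiteGraph (Fin n₁) (Fin n₂)) π := by
  have h := mul_card_mul_card_le_four_mul_cbs (he₁.add he₂) π
  rw [Fintype.card_fin, Fintype.card_fin] at h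
  apply Nat.div_le_of_le_mul
  linarith

theorem cbs_completeBipartite_lb (n₁ n₂ : ℕ) (h₁ : 2 ≤ n₁) (h₂ : 2 ≤ n₂)
    (he₁ : Even n₁) (he₂ : Even n₂)
    (π : (Fin n₁ ⊕ Fin n₂) ≃ Fin (n₁ + n₂)) :
    (n₁ * n₂ ^ 2 + n₁ ^ 2 * n₂) / 4 ≤
      CBS (n₁ + n₂) (completeBipartiteGraph (Fin n₁) (Fin n₂)) π :=
  cbs_completeBipartite_lb_general n₁ n₂ he₁ he₂ π
end

section
/- For the Cartesian product C_m × K_n of a cycle C_m and a complete graph K_n (m ≥ 3, n ≥ 2), the optimal cyclic bandwidth sum is at most n·((1/2)·m²·⌊n/2⌋·⌈n/2⌉ + 2m − 2); i.e., there exists a bijective labeling achieving CBS at most this bound. -/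
/-- The cycle graph on `{0,...,m-1}`. -/
def cycleGraph (m : ℕ) : SimpleGraph (Fin m) where
  Adj a b := a ≠ b ∧ ((a.val + 1) % m = b.val ∨ (b.val + 1) % m = a.val)
  symm := ⟨by intro a b ⟨h1, h2⟩; exact ⟨h1.symm, h2.symm⟩⟩
  loopless := ⟨by intro a ⟨h1, _⟩; exact h1 rfl⟩

/-!
Label the vertex `(a, b)` of `C_m □ K_n` by `b + n a` (`finProdFinEquiv`), so that every copy of
`K_n` occupies a block of `n` consecutive labels. Each cycle edge then joins labels at cyclic
distance exactly `n` (the edge closing the cycle wraps around the label range), while inside a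
block the cyclic distance is the ordinary one. Hence
`2 CBS = m (2 n² + ∑_{b,d<n} |b - d|) = m (2 n² + (n³ - n) / 3)`, and this lies below the bound
by a polynomial inequality in `m ≥ 3` and `n`.
-/
open Finset

namespace SimpleGraph

theorem sum_sum_neighborFinset_eq_two_nsmul {V M : Type*} [Fintype V] [DecidableEq V]
    [AddCommMonoid M] (G : SimpleGraph V) [DecidableRel G.Adj] (f : Sym2 V → M) :
    ∑ u, ∑ v ∈ G.neighborFinset u, f s(u, v) = 2 • ∑ e ∈ G.edgeFinset, f e := by
  have hfst : ∑ u, ∑ v ∈ G.neighborFinset u, f s(u, v) = ∑ d : G.Dart, f d.edge := by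
    rw [← sum_fiberwise_of_maps_to (g := fun d : G.Dart => d.fst) (t := univ)
      fun _ _ => mem_univ _]
    refine sum_congr rfl fun u _ => ?_
    rw [dart_fst_fiber, sum_image fun _ _ _ _ h => G.dartOfNeighborSet_injective u h]
    exact (sum_subtype _ (fun v => mem_neighborFinset G u v) (fun v => f s(u, v))).trans rfl
  have hedge : ∑ d : G.Dart, f d.edge = 2 • ∑ e ∈ G.edgeFinset, f e := by
    rw [← sum_fiberwise_of_maps_to (g := Dart.edge) (t := G.edgeFinset)
      (fun d _ => mem_edgeFinset.mpr d.edge_mem), smul_sum]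
    refine sum_congr rfl fun e he => ?_
    rw [sum_congr rfl fun d hd => congrArg f (mem_filter.mp hd).2, sum_const,
      G.dart_edge_fiber_card e (mem_edgeFinset.mp he)]
  rw [hfst, hedge]

theorem sum_neighborFinset_boxProd {V W M : Type*} [AddCommMonoid M] (G : SimpleGraph V)
    (H : SimpleGraph W) (x : V × W) [Fintype (G.neighborSet x.1)] [Fintype (H.neighborSet x.2)]
    [Fintype ((G □ H).neighborSet x)] (f : V × W → M) :
    ∑ y ∈ (G □ H).neighborFinset x, f y =
      ∑ a ∈ G.neighborFinset x.1, f (a, x.2) + ∑ b ∈ H.neighborFinset x.2, f (x.1, b) := by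
  rw [neighborFinset_boxProd, sum_disjUnion, sum_product, sum_product]
  simp only [sum_singleton]

end SimpleGraph

theorem dCn_comm (N a b : ℕ) : dCn N a b = dCn N b a := by
  simp only [dCn, Nat.dist_comm]

theorem dCn_eq_dist (N a b : ℕ) (h : 2 * Nat.dist a b ≤ N) : dCn N a b = Nat.dist a b := by
  unfold dCn; omega

theorem dCn_eq_of_dist_eq_sub (N a b k : ℕ) (hk : 2 * k ≤ N) (h : Nat.dist a b = N - k) :
    dCn N a b = k := by
  unfold dCn; omega

theorem two_mul_CBS {V : Type*} [Fintype V] [DecidableEq V] (N : ℕ) (G : SimpleGraph V)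
    [DecidableRel G.Adj] (π : V → Fin N) :
    2 * CBS N G π = ∑ u, ∑ v ∈ G.neighborFinset u, dCn N (π u) (π v) := by
  rw [CBS, ← smul_eq_mul]
  convert (SimpleGraph.sum_sum_neighborFinset_eq_two_nsmul G
    (Sym2.lift ⟨fun u v => dCn N (π u) (π v), fun u v => dCn_comm N _ _⟩)).symm
  rfl

theorem cycleGraph_eq_simpleGraph_cycleGraph {m : ℕ} (hm : 2 ≤ m) :
    cycleGraph m = SimpleGraph.cycleGraph m := by
  obtain ⟨k, rfl⟩ := Nat.exists_eq_add_of_le' hm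
  have hsucc (x y : Fin (k + 2)) : (x.1 + 1) % (k + 2) = y.1 ↔ y = x + 1 := by
    rw [Fin.ext_iff, Fin.val_add, Fin.val_one, eq_comm]
  ext a c
  change a ≠ c ∧ ((a.1 + 1) % (k + 2) = c.1 ∨ (c.1 + 1) % (k + 2) = a.1) ↔ _
  rw [SimpleGraph.cycleGraph_adj, sub_eq_iff_eq_add', sub_eq_iff_eq_add', hsucc, hsucc, or_comm]
  refine ⟨And.right, fun h => ⟨?_, h⟩⟩
  rintro rfl
  simp at h

theorem cycleGraph_degree {m : ℕ} (hm : 3 ≤ m) (a : Fin m)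
    [Fintype ((cycleGraph m).neighborSet a)] : (cycleGraph m).degree a = 2 := by
  obtain ⟨k, rfl⟩ := Nat.exists_eq_add_of_le' hm
  convert SimpleGraph.cycleGraph_degree_three_le (v := a)
  exact cycleGraph_eq_simpleGraph_cycleGraph (by omega)

theorem cycleGraph_adj_dist {m : ℕ} {a c : Fin m} (h : (cycleGraph m).Adj a c) :
    Nat.dist a c = 1 ∨ Nat.dist a c = m - 1 := by
  have hsucc (x y : Fin m) (hxy : (x.1 + 1) % m = y.1) :
      y.1 = x.1 + 1 ∨ (x.1 + 1 = m ∧ y.1 = 0) := by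
    rcases Nat.lt_or_ge (x.1 + 1) m with hlt | hge
    · exact Or.inl (by rw [← hxy, Nat.mod_eq_of_lt hlt])
    · have hx : x.1 + 1 = m := by omega
      exact Or.inr ⟨hx, by rw [← hxy, hx, Nat.mod_self]⟩
  obtain ⟨-, h | h⟩ := h <;> rcases hsucc _ _ h with h' | h' <;> unfold Nat.dist <;> omega

theorem dCn_finProdFinEquiv_of_cycleGraph_adj {m n : ℕ} {a c : Fin m}
    (h : (cycleGraph m).Adj a c) (b : Fin n) :
    dCn (m * n) (finProdFinEquiv (a, b)) (finProdFinEquiv (c, b)) = n := by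
  have hm : 2 ≤ m := by
    have := Fin.val_ne_of_ne h.1; have := a.2; have := c.2; omega
  have hdist : Nat.dist (finProdFinEquiv (a, b)) (finProdFinEquiv (c, b)) = n * Nat.dist a c := by
    simp only [finProdFinEquiv_apply_val, Nat.dist_add_add_left, Nat.dist_mul_left]
  have h2n : 2 * n ≤ m * n := Nat.mul_le_mul_right n hm
  rcases cycleGraph_adj_dist h with h1 | h1
  · rw [dCn_eq_dist _ _ _ (by rw [hdist, h1]; omega), hdist, h1, mul_one]
  · exact dCn_eq_of_dist_eq_sub _ _ _ _ h2n (by rw [hdist, h1, Nat.mul_sub_one, mul_comm])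

theorem dCn_finProdFinEquiv_right {m n : ℕ} (hm : 2 ≤ m) (a : Fin m) (b d : Fin n) :
    dCn (m * n) (finProdFinEquiv (a, b)) (finProdFinEquiv (a, d)) = Nat.dist b d := by
  have hdist : Nat.dist (finProdFinEquiv (a, b)) (finProdFinEquiv (a, d)) = Nat.dist b d := by
    simp only [finProdFinEquiv_apply_val, Nat.dist_add_add_right]
  have hlt : Nat.dist b d < n := by unfold Nat.dist; omega
  have h2n : 2 * n ≤ m * n := Nat.mul_le_mul_right n hm
  rw [dCn_eq_dist _ _ _ (by omega), hdist]

theorem two_mul_sum_range_dist (k : ℕ) : 2 * ∑ b ∈ range k, Nat.dist b k = k * (k + 1) := by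
  induction k with
  | zero => simp
  | succ k ih =>
    have hstep : ∀ b ∈ range k, Nat.dist b (k + 1) = Nat.dist b k + 1 := fun b hb => by
      have := mem_range.mp hb; unfold Nat.dist; omega
    rw [sum_range_succ, sum_congr rfl hstep, sum_add_distrib, sum_const, card_range,
      Nat.dist_eq_sub_of_le (by omega), Nat.add_sub_cancel_left, smul_eq_mul, mul_one]
    nlinarith

theorem three_mul_sum_range_sum_range_dist_add (n : ℕ) :
    3 * ∑ b ∈ range n, ∑ d ∈ range n, Nat.dist b d + n = n ^ 3 := by
  induction n with
  | zero => simp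
  | succ k ih =>
    have hrow := two_mul_sum_range_dist k
    have hcol : ∑ d ∈ range k, Nat.dist k d = ∑ b ∈ range k, Nat.dist b k :=
      sum_congr rfl fun d _ => Nat.dist_comm k d
    simp only [sum_range_succ, sum_add_distrib, Nat.dist_self, add_zero, hcol]
    nlinarith

theorem two_mul_CBS_finProdFinEquiv {m : ℕ} (n : ℕ) (hm : 3 ≤ m) :
    2 * CBS (m * n) ((cycleGraph m).boxProd (⊤ : SimpleGraph (Fin n))) finProdFinEquiv =
      m * (2 * n ^ 2 + ∑ b ∈ range n, ∑ d ∈ range n, Nat.dist b d) := by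
  classical
  have hcycle (a : Fin m) (b : Fin n) :
      ∑ c ∈ (cycleGraph m).neighborFinset a,
        dCn (m * n) (finProdFinEquiv (a, b)) (finProdFinEquiv (c, b)) = 2 * n := by
    rw [sum_congr rfl fun c hc =>
      dCn_finProdFinEquiv_of_cycleGraph_adj ((SimpleGraph.mem_neighborFinset _ _ _).mp hc) b,
      sum_const, SimpleGraph.card_neighborFinset_eq_degree, cycleGraph_degree hm, smul_eq_mul]
  have hcomplete (a : Fin m) (b : Fin n) :
      ∑ d ∈ (⊤ : SimpleGraph (Fin n)).neighborFinset b,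
        dCn (m * n) (finProdFinEquiv (a, b)) (finProdFinEquiv (a, d)) =
          ∑ d : Fin n, Nat.dist b d := by
    rw [SimpleGraph.neighborFinset_top, ← sum_compl_add_sum {b}, sum_singleton, Nat.dist_self,
      add_zero]
    exact sum_congr rfl fun d _ => dCn_finProdFinEquiv_right (by omega) a b d
  rw [two_mul_CBS, Fintype.sum_prod_type]
  simp only [SimpleGraph.sum_neighborFinset_boxProd, hcycle, hcomplete, sum_add_distrib,
    sum_const, card_univ, Fintype.card_fin, smul_eq_mul, sum_range]
  ring

theorem blockLabeling_cost_le {m n : ℕ} (hm : 3 ≤ m) :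
    (m : ℚ) * n ^ 2 + m * (n ^ 3 - n) / 6 ≤
      n * ((1 / 2) * m ^ 2 * (n / 2 : ℕ) * ((n + 1) / 2 : ℕ) + 2 * m - 2) := by
  have hs : (0 : ℚ) ≤ m - 3 := sub_nonneg.mpr (by exact_mod_cast hm)
  obtain ⟨q, rfl | rfl⟩ := Nat.even_or_odd' n
  · rw [show 2 * q / 2 = q by omega, show (2 * q + 1) / 2 = q by omega]
    have hq : (0 : ℚ) ≤ q := q.cast_nonneg
    push_cast
    nlinarith [mul_nonneg hq (mul_nonneg hq hs), mul_nonneg hq (mul_nonneg (mul_nonneg hq hq) hs),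
      mul_nonneg hq (sq_nonneg ((q : ℚ) - 1)),
      mul_nonneg (mul_nonneg hq (sq_nonneg ((q : ℚ) - 1))) hs]
  · rw [show (2 * q + 1) / 2 = q by omega, show (2 * q + 1 + 1) / 2 = q + 1 by omega]
    rcases Nat.eq_zero_or_pos q with rfl | hq
    · norm_num; linarith
    -- After dividing by `n = 2q + 1` the slack is `3(q - 1)(5q - 2) + (m - 3)(14q² + 2q + 6)
    -- + 3(m - 3)²q(q + 1)`, which vanishes at `q = 1, m = 3` and needs `q ≥ 1`.
    have hq : (1 : ℚ) ≤ q := by exact_mod_cast hq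
    have hn : (0 : ℚ) ≤ 2 * q + 1 := by linarith
    push_cast
    have h5 : (0 : ℚ) ≤ 5 * q - 2 := by linarith
    nlinarith [mul_nonneg hn (mul_nonneg (sub_nonneg.mpr hq) h5),
      mul_nonneg hn (mul_nonneg hs (by positivity : (0 : ℚ) ≤ 14 * q ^ 2 + 2 * q + 6)),
      mul_nonneg hn (mul_nonneg (mul_nonneg hs hs) (by positivity : (0 : ℚ) ≤ q * (q + 1)))]

theorem cbs_boxProd_cycle_complete_ub_general (m n : ℕ) (hm : 3 ≤ m) :
    ∃ π : (Fin m × Fin n) ≃ Fin (m * n),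
      (CBS (m * n) ((cycleGraph m).boxProd (⊤ : SimpleGraph (Fin n))) π : ℚ) ≤
        (n : ℚ) * ((1 / 2) * m ^ 2 * (n / 2 : ℕ) * ((n + 1) / 2 : ℕ) + 2 * m - 2) := by
  refine ⟨finProdFinEquiv, le_of_eq_of_le ?_ (blockLabeling_cost_le hm)⟩
  have hcbs : (2 * CBS (m * n) ((cycleGraph m).boxProd ⊤) finProdFinEquiv : ℚ) =
      m * (2 * n ^ 2 + ∑ b ∈ range n, ∑ d ∈ range n, Nat.dist b d) := by
    exact_mod_cast two_mul_CBS_finProdFinEquiv n hm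
  have hdist : (3 * ∑ b ∈ range n, ∑ d ∈ range n, Nat.dist b d + n : ℚ) = n ^ 3 := by
    exact_mod_cast three_mul_sum_range_sum_range_dist_add n
  linear_combination hcbs / 2 + m * hdist / 6

theorem cbs_boxProd_cycle_complete_ub (m n : ℕ) (hm : 3 ≤ m) (hn : 2 ≤ n) :
    ∃ π : (Fin m × Fin n) ≃ Fin (m * n),
      (CBS (m * n) ((cycleGraph m).boxProd (⊤ : SimpleGraph (Fin n))) π : ℚ) ≤
        (n : ℚ) * ((1 / 2) * m ^ 2 * (n / 2 : ℕ) * ((n + 1) / 2 : ℕ) + 2 * m - 2) :=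
  cbs_boxProd_cycle_complete_ub_general m n hm
end
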